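/- MDP-aligned MPC is exactly optimal for deterministic environments: suppose the MDP is deterministic, i.e., there is f : S → A → S with P s a = PMF.pure (f s a) for all (s,a). Then for every horizon N ≥ 1 and every s ∈ S, a ∈ A, writing, for an action sequence u : Fin N → A, x_0 = s and x_{k+1} = f(x_k, u_k): min over all u of [ ∑_{k=0}^{N-1} γ^k · l(x_k, u_k) + γ^N · V⋆(x_N) ] equals V⋆(s) := min_{a'} Q⋆(s,a'), and min over all u with u_0 = a of the same cost equals Q⋆(s,a). -/
import Mathlib


open Finset

/-- The Bellman optimality operator `T` on action-value functions for a finite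
discounted MDP: `(T Q)(s,a) = l(s,a) + γ ∑_{s'} P(s'|s,a) · min_{a'} Q(s',a')`. -/
noncomputable def Topt {S A : Type*} [Fintype S] [Fintype A] [Nonempty A]
    (P : S → A → PMF S) (l : S → A → ℝ) (γ : ℝ) (Q : S × A → ℝ) : S × A → ℝ :=
  fun sa => l sa.1 sa.2 +
    γ * ∑ s' : S, (P sa.1 sa.2 s').toReal *
      (univ.inf' univ_nonempty fun a' => Q (s', a'))

/-- Trajectory of the deterministic model `f` started at `s` under the action
sequence `u : Fin N → A`: `x_0 = s`, `x_{k+1} = f(x_k, u_k)` for `k < N`. -/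
def xtraj {S A : Type*} (f : S → A → S) (s : S) {N : ℕ} (u : Fin N → A) : ℕ → S
  | 0 => s
  | k + 1 => if h : k < N then f (xtraj f s u k) (u ⟨k, h⟩) else xtraj f s u k

/-- The discounted finite-horizon MPC cost
`∑_{k<N} γ^k l(x_k,u_k) + γ^N V̄(x_N)` along the trajectory of model `f`. -/
noncomputable def discCost {S A : Type*} (f : S → A → S) (l : S → A → ℝ) (γ : ℝ)
    (Vbar : S → ℝ) (s : S) {N : ℕ} (u : Fin N → A) : ℝ :=
  (∑ k : Fin N, γ ^ (k : ℕ) * l (xtraj f s u (k : ℕ)) (u k)) +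
    γ ^ N * Vbar (xtraj f s u N)



lemma xtraj_succ_shift {S A : Type*} (f : S → A → S) (s : S) {N : ℕ}
    (u : Fin (N+1) → A) (k : ℕ) :
    xtraj f s u (k+1) = xtraj f (f s (u 0)) (fun j : Fin N => u j.succ) k := by
  induction k with
  | zero => simp [xtraj]
  | succ k ih =>
    show (if h : k+1 < N+1 then _ else _) = (if h : k < N then _ else _)
    by_cases h : k < N
    · rw [dif_pos (by omega : k+1 < N+1), dif_pos h, ih]; rfl
    · rw [dif_neg (by omega), dif_neg h, ih]

lemma discCost_succ {S A : Type*} (f : S → A → S) (l : S → A → ℝ) (γ : ℝ)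
    (V : S → ℝ) (s : S) {N : ℕ} (u : Fin (N+1) → A) :
    discCost f l γ V s u =
      l s (u 0) + γ * discCost f l γ V (f s (u 0)) (fun j : Fin N => u j.succ) := by
  have hsh := xtraj_succ_shift f s u
  simp only [discCost, Fin.sum_univ_succ, Fin.val_succ, Fin.val_zero, pow_zero, one_mul, hsh]
  show l (xtraj f s u 0) (u 0) + _ + _ = _
  rw [mul_add, Finset.mul_sum]
  have h0 : xtraj f s u 0 = s := rfl
  rw [h0, add_assoc]
  congr 1
  congr 1
  · exact Finset.sum_congr rfl fun j _ => by ring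
  · ring

lemma bellman_det {S A : Type*} [Fintype S] [Fintype A] [Nonempty A]
    (P : S → A → PMF S) (l : S → A → ℝ) (γ : ℝ)
    (Qstar : S × A → ℝ) (hQstar : Topt P l γ Qstar = Qstar)
    (f : S → A → S) (hdet : ∀ s : S, ∀ a : A, P s a = PMF.pure (f s a))
    (s : S) (a : A) :
    Qstar (s, a) = l s a +
      γ * (univ.inf' univ_nonempty fun a' => Qstar (f s a, a')) := by
  classical
  conv_lhs => rw [← hQstar]
  simp only [Topt, hdet, PMF.pure_apply, apply_ite ENNReal.toReal, ite_mul,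
    ENNReal.toReal_one, ENNReal.toReal_zero, one_mul, zero_mul]
  rw [Finset.sum_ite_eq' univ (f s a)]
  simp

lemma V_isLeast {S A : Type*} [Fintype S] [Fintype A] [Nonempty A]
    (P : S → A → PMF S) (l : S → A → ℝ) (γ : ℝ) (hγ0 : 0 ≤ γ)
    (Qstar : S × A → ℝ) (hQstar : Topt P l γ Qstar = Qstar)
    (f : S → A → S) (hdet : ∀ s : S, ∀ a : A, P s a = PMF.pure (f s a)) :
    ∀ N : ℕ, ∀ s : S,
      IsLeast {c : ℝ | ∃ u : Fin N → A,
          discCost f l γ (fun x => univ.inf' univ_nonempty fun a' => Qstar (x, a'))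
            s u = c}
        (univ.inf' univ_nonempty fun a' => Qstar (s, a')) := by
  intro N
  induction N with
  | zero =>
    intro s
    constructor
    · exact ⟨fun i => i.elim0, by simp [discCost, xtraj]⟩
    · rintro c ⟨u, rfl⟩
      simp [discCost, xtraj]
  | succ N ih =>
    intro s
    constructor
    · obtain ⟨a0, -, ha0⟩ := Finset.exists_mem_eq_inf' (univ_nonempty (α := A))
        (fun a' => Qstar (s, a'))
      obtain ⟨u', hu'⟩ := (ih (f s a0)).1
      refine ⟨Fin.cons a0 u', ?_⟩
      rw [discCost_succ]
      simp only [Fin.cons_zero, Fin.cons_succ]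
      rw [hu', ha0, ← bellman_det P l γ Qstar hQstar f hdet]
    · rintro c ⟨u, rfl⟩
      rw [discCost_succ]
      have h1 := (ih (f s (u 0))).2 ⟨fun j => u j.succ, rfl⟩
      have h2 : (univ.inf' univ_nonempty fun a' => Qstar (s, a')) ≤ Qstar (s, u 0) :=
        Finset.inf'_le _ (mem_univ _)
      rw [bellman_det P l γ Qstar hQstar f hdet s (u 0)] at h2
      nlinarith


/-- MDP-aligned MPC is exactly optimal for deterministic environments: if
`P s a = PMF.pure (f s a)`, then for every horizon `N ≥ 1` and every `(s,a)`,
the minimum over action sequences of the discounted cost with terminal cost `V⋆`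
equals `V⋆(s) = min_{a'} Q⋆(s,a')`, and the minimum over sequences with
`u_0 = a` equals `Q⋆(s,a)` (`IsLeast` expresses the attained minimum). -/
theorem aligned_mpc_optimal_for_deterministic_mdp
    {S A : Type*} [Fintype S] [Fintype A] [Nonempty S] [Nonempty A]
    (P : S → A → PMF S) (l : S → A → ℝ) (γ : ℝ) (hγ0 : 0 ≤ γ) (hγ1 : γ < 1)
    (Qstar : S × A → ℝ) (hQstar : Topt P l γ Qstar = Qstar)
    (f : S → A → S) (hdet : ∀ s : S, ∀ a : A, P s a = PMF.pure (f s a)) :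
    ∀ N : ℕ, ∀ hN : 0 < N, ∀ s : S, ∀ a : A,
      IsLeast {c : ℝ | ∃ u : Fin N → A,
          discCost f l γ (fun x => univ.inf' univ_nonempty fun a' => Qstar (x, a'))
            s u = c}
        (univ.inf' univ_nonempty fun a' => Qstar (s, a')) ∧
      IsLeast {c : ℝ | ∃ u : Fin N → A, u ⟨0, hN⟩ = a ∧
          discCost f l γ (fun x => univ.inf' univ_nonempty fun a' => Qstar (x, a'))
            s u = c}
        (Qstar (s, a)) := by
  intro N hN s a
  refine ⟨V_isLeast P l γ hγ0 Qstar hQstar f hdet N s, ?_⟩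
  obtain ⟨M, rfl⟩ : ∃ M, N = M + 1 := ⟨N - 1, by omega⟩
  constructor
  · obtain ⟨u', hu'⟩ := (V_isLeast P l γ hγ0 Qstar hQstar f hdet M (f s a)).1
    refine ⟨Fin.cons a u', rfl, ?_⟩
    rw [discCost_succ]
    simp only [Fin.cons_zero, Fin.cons_succ]
    rw [hu', ← bellman_det P l γ Qstar hQstar f hdet]
  · rintro c ⟨u, hu0, rfl⟩
    rw [discCost_succ]
    have h1 := (V_isLeast P l γ hγ0 Qstar hQstar f hdet M (f s (u 0))).2
      ⟨fun j => u j.succ, rfl⟩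
    have hu0' : u 0 = a := hu0
    rw [hu0'] at h1 ⊢
    rw [bellman_det P l γ Qstar hQstar f hdet s a]
    nlinarith
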